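/- arXiv:math/0505379 — 5 statements merged into one kernel-verified Lean document; each statement's English description precedes it below -/
import Mathlib

section
/- Let ν and κ be partitions with at most r parts, with β-number sequences β_r(ν) = (α_1,...,α_r) and β_r(κ) = (β_1,...,β_r) relative to a fixed charge s. If there exist b ∈ {1,...,r} and a positive integer h such that the set of β-numbers of ν equals {β_1,...,β_{b-1}, β_b - h, β_{b+1},...,β_r} (a set of r distinct integers), then ν ⊆ κ and the skew diagram κ/ν is a ribbon of length h. -/
/-- Two boxes share a common side. -/
def Adj (a b : ℕ × ℕ) : Prop :=
  (a.1 = b.1 ∧ (a.2 = b.2 + 1 ∨ b.2 = a.2 + 1)) ∨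
  (a.2 = b.2 ∧ (a.1 = b.1 + 1 ∨ b.1 = a.1 + 1))

/-- A diagram is connected if any two of its boxes are joined by a path of
side-adjacent boxes lying inside the diagram. -/
def IsConnectedDiagram (θ : Set (ℕ × ℕ)) : Prop :=
  ∀ a ∈ θ, ∀ b ∈ θ, Relation.ReflTransGen (fun x y => y ∈ θ ∧ Adj x y) a b

/-- The diagram contains no 2×2 block of boxes. -/
def NoSquare (θ : Set (ℕ × ℕ)) : Prop :=
  ¬ ∃ i j : ℕ, (i, j) ∈ θ ∧ (i + 1, j) ∈ θ ∧ (i, j + 1) ∈ θ ∧ (i + 1, j + 1) ∈ θ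

/-- A ribbon: a nonempty connected diagram with no 2×2 block of boxes. -/
def IsRibbon (θ : Set (ℕ × ℕ)) : Prop :=
  θ.Nonempty ∧ IsConnectedDiagram θ ∧ NoSquare θ

/-- Young diagram (rows and columns numbered from 1) of a partition with
at most `r` parts, given as `f : Fin r → ℕ`. -/
def cellsF {r : ℕ} (f : Fin r → ℕ) : Set (ℕ × ℕ) :=
  {p | ∃ i : Fin r, p.1 = (i : ℕ) + 1 ∧ 1 ≤ p.2 ∧ p.2 ≤ f i}

/-- The β-number `λ_i + s + 1 - i` (0-based index `i : Fin r`). -/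
def betaNum {r : ℕ} (s : ℤ) (f : Fin r → ℕ) (i : Fin r) : ℤ :=
  (f i : ℤ) + s - (i : ℤ)

/-- The set of β-numbers. -/
def betaFinset {r : ℕ} (s : ℤ) (f : Fin r → ℕ) : Finset ℤ :=
  Finset.image (betaNum s f) Finset.univ

/-- Dominance: all partial sums of `ν` are at most those of `κ`. -/
def Dominates {r : ℕ} (ν κ : Fin r → ℕ) : Prop :=
  ∀ k : Fin r, ∑ i ∈ Finset.univ.filter (· ≤ k), ν i ≤ ∑ i ∈ Finset.univ.filter (· ≤ k), κ i

/-- Strict dominance. -/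
def StrictlyDominates {r : ℕ} (ν κ : Fin r → ℕ) : Prop :=
  Dominates ν κ ∧ ν ≠ κ

/-!
Deleting `α_c = β_b - h` from `β_r(ν)` and `β_b` from `β_r(κ)` leaves the same strictly decreasing
sequence, so `α ∘ c.succAbove = β ∘ b.succAbove`. Read row by row (with `b ≤ c`, forced by
`α_c < β_b`), this says that `ν` and `κ` agree outside rows `b, …, c` and `κ_{i+1} = ν_i + 1` for
`b ≤ i < c`: consecutive rows of `κ / ν` overlap in exactly one column, which makes it a connected
strip without `2 × 2` blocks. Its size is `∑ κ - ∑ ν = ∑ β - ∑ α = h`.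
-/

lemma Adj.symm {a b : ℕ × ℕ} (h : Adj a b) : Adj b a := by
  unfold Adj at *
  omega

section Paths

variable {θ : Set (ℕ × ℕ)}

lemma reflTransGen_symm_of_mem {a b : ℕ × ℕ}
    (hab : Relation.ReflTransGen (fun x y => y ∈ θ ∧ Adj x y) a b) (ha : a ∈ θ) :
    Relation.ReflTransGen (fun x y => y ∈ θ ∧ Adj x y) b a := by
  suffices b ∈ θ ∧ Relation.ReflTransGen (fun x y => y ∈ θ ∧ Adj x y) b a from this.2
  induction hab with
  | refl => exact ⟨ha, .refl⟩
  | tail _ hstep ih => exact ⟨hstep.1, .head ⟨ih.1, hstep.2.symm⟩ ih.2⟩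

lemma isConnectedDiagram_of_forall_reflTransGen (t : ℕ × ℕ)
    (h : ∀ a ∈ θ, Relation.ReflTransGen (fun x y => y ∈ θ ∧ Adj x y) a t) :
    IsConnectedDiagram θ :=
  fun a ha b hb => (h a ha).trans (reflTransGen_symm_of_mem (h b hb) hb)

lemma reflTransGen_row {a lo hi : ℕ} (hle : lo ≤ hi) (hrow : ∀ j, lo ≤ j → j ≤ hi → (a, j) ∈ θ) :
    Relation.ReflTransGen (fun x y => y ∈ θ ∧ Adj x y) (a, hi) (a, lo) := by
  induction hi, hle using Nat.le_induction with
  | base => exact .refl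
  | succ hi hlo ih =>
    refine .head ⟨hrow hi hlo (by omega), Or.inl ⟨rfl, Or.inl rfl⟩⟩ (ih fun j h₁ h₂ => ?_)
    exact hrow j h₁ (by omega)

end Paths

section Diagram

variable {r : ℕ}

lemma cellsF_eq_coe_image (f : Fin r → ℕ) :
    cellsF f = ↑((Finset.univ.sigma fun i => Finset.Icc 1 (f i)).image
      fun p => ((p.1 : ℕ) + 1, p.2)) := by
  ext ⟨a, j⟩
  simp only [cellsF, Set.mem_ofPred_eq, Finset.mem_coe, Finset.mem_image, Finset.mem_sigma,
    Finset.mem_univ, Finset.mem_Icc, true_and, Prod.mk.injEq, Sigma.exists]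
  constructor
  · rintro ⟨i, rfl, hj⟩
    exact ⟨i, j, hj, rfl, rfl⟩
  · rintro ⟨i, j, hj, rfl, rfl⟩
    exact ⟨i, rfl, hj⟩

lemma cellsF_finite (f : Fin r → ℕ) : (cellsF f).Finite := by
  rw [cellsF_eq_coe_image]
  exact Finset.finite_toSet _

lemma ncard_cellsF (f : Fin r → ℕ) : (cellsF f).ncard = ∑ i, f i := by
  rw [cellsF_eq_coe_image, Set.ncard_coe_finset, Finset.card_image_of_injective, Finset.card_sigma]
  · simp
  · rintro ⟨i, j⟩ ⟨i', j'⟩ h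
    simp only [Prod.mk.injEq, Nat.add_right_cancel_iff, Fin.val_inj] at h
    obtain ⟨rfl, rfl⟩ := h
    rfl

lemma cellsF_subset_cellsF {ν κ : Fin r → ℕ} (h : ∀ i, ν i ≤ κ i) : cellsF ν ⊆ cellsF κ :=
  fun _ ⟨i, hrow, hpos, hcol⟩ => ⟨i, hrow, hpos, hcol.trans (h i)⟩

lemma mem_cellsF_sdiff {ν κ : Fin r → ℕ} {p : ℕ × ℕ} :
    p ∈ cellsF κ \ cellsF ν ↔ ∃ i : Fin r, p.1 = i + 1 ∧ ν i < p.2 ∧ p.2 ≤ κ i := by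
  constructor
  · rintro ⟨⟨i, hrow, hpos, hcol⟩, hν⟩
    refine ⟨i, hrow, not_le.mp fun hle => hν ⟨i, hrow, hpos, hle⟩, hcol⟩
  · rintro ⟨i, hrow, hlt, hcol⟩
    refine ⟨⟨i, hrow, by omega, hcol⟩, ?_⟩
    rintro ⟨i', hrow', -, hle⟩
    obtain rfl : i' = i := Fin.ext (by omega)
    omega

lemma mk_mem_cellsF_sdiff {ν κ : Fin r → ℕ} {i : Fin r} {j : ℕ} :
    ((i : ℕ) + 1, j) ∈ cellsF κ \ cellsF ν ↔ ν i < j ∧ j ≤ κ i := by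
  rw [mem_cellsF_sdiff]
  constructor
  · rintro ⟨i', hrow, hcell⟩
    obtain rfl : i' = i := Fin.ext (by dsimp only at hrow; omega)
    exact hcell
  · exact fun hcell => ⟨i, rfl, hcell⟩

lemma reflTransGen_row_cellsF_sdiff {ν κ : Fin r → ℕ} (i : Fin r) {j : ℕ} (hj : ν i < j)
    (hjκ : j ≤ κ i) :
    Relation.ReflTransGen (fun x y => y ∈ cellsF κ \ cellsF ν ∧ Adj x y)
      ((i : ℕ) + 1, j) ((i : ℕ) + 1, ν i + 1) :=
  reflTransGen_row hj fun _ h₁ h₂ => mk_mem_cellsF_sdiff.mpr ⟨h₁, h₂.trans hjκ⟩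

end Diagram

lemma noSquare_cellsF_sdiff {n : ℕ} {ν κ : Fin (n + 1) → ℕ}
    (h : ∀ k : Fin n, κ k.succ ≤ ν k.castSucc + 1) : NoSquare (cellsF κ \ cellsF ν) := by
  rintro ⟨a, j, htop, -, -, hbot⟩
  obtain ⟨i, rfl, hνi, -⟩ := mem_cellsF_sdiff.mp htop
  obtain ⟨i', hrow, -, hκi'⟩ := mem_cellsF_sdiff.mp hbot
  dsimp only at hrow hνi hκi'
  obtain ⟨k, rfl⟩ := (Fin.exists_castSucc_eq (i := i)).mpr (Fin.ne_last_of_lt (b := i') (by omega))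
  obtain rfl : i' = k.succ := by
    ext
    simp only [Fin.val_succ, Fin.val_castSucc] at hrow ⊢
    omega
  have := h k
  omega

lemma betaNum_strictAnti {r : ℕ} (s : ℤ) {f : Fin r → ℕ} (hf : Antitone f) :
    StrictAnti (betaNum s f) := by
  intro i j hij
  have := hf hij.le
  have : (i : ℕ) < j := hij
  simp only [betaNum]
  omega

lemma comp_succAbove_eq_of_erase_eq {α : Type*} [LinearOrder α] {n : ℕ}
    {f g : Fin (n + 1) → α} (hf : StrictAnti f) (hg : StrictAnti g) {c b : Fin (n + 1)}
    (h : (Finset.univ.image f).erase (f c) = (Finset.univ.image g).erase (g b)) :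
    f ∘ c.succAbove = g ∘ b.succAbove := by
  refine ((hf.comp_strictMono (Fin.strictMono_succAbove c)).range_inj
    (hg.comp_strictMono (Fin.strictMono_succAbove b))).mp ?_
  have := congrArg ((↑) : Finset α → Set α) h
  simp only [Finset.coe_erase, Finset.coe_image, Finset.coe_univ, Set.image_univ] at this
  rw [Set.range_comp, Set.range_comp, Fin.range_succAbove, Fin.range_succAbove,
    Set.image_compl_eq_range_sdiff_image hf.injective,
    Set.image_compl_eq_range_sdiff_image hg.injective, Set.image_singleton, Set.image_singleton,
    this]

/-- The shape of a ribbon `κ / ν` in rows `b, …, c`: outside them `ν` and `κ` agree, and inside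
them row `k + 1` of `κ` ends right below the first box of `κ / ν` in row `k`. -/
structure IsRimHook {n : ℕ} (ν κ : Fin (n + 1) → ℕ) (b c : Fin (n + 1)) : Prop where
  eq_of_lt : ∀ i, i < b → ν i = κ i
  eq_of_gt : ∀ i, c < i → ν i = κ i
  succ_eq : ∀ k : Fin n, b ≤ k.castSucc → k.succ ≤ c → κ k.succ = ν k.castSucc + 1
  lt_last : ν c < κ c

namespace IsRimHook

variable {n : ℕ} {ν κ : Fin (n + 1) → ℕ} {b c : Fin (n + 1)}

lemma mem_Icc_of_lt (H : IsRimHook ν κ b c) {i : Fin (n + 1)} (hi : ν i < κ i) :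
    i ∈ Set.Icc b c :=
  ⟨not_lt.mp fun hib => hi.ne (H.eq_of_lt i hib), not_lt.mp fun hci => hi.ne (H.eq_of_gt i hci)⟩

lemma le (H : IsRimHook ν κ b c) (hκ : Antitone κ) (i : Fin (n + 1)) : ν i ≤ κ i := by
  rcases lt_or_ge i b with hb | hb
  · exact (H.eq_of_lt i hb).le
  rcases lt_trichotomy i c with hc | rfl | hc
  · obtain ⟨k, rfl⟩ := Fin.exists_castSucc_eq.mpr (hc.trans_le (Fin.le_last c)).ne
    calc ν k.castSucc ≤ ν k.castSucc + 1 := Nat.le_succ _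
      _ = κ k.succ := (H.succ_eq k hb (Fin.castSucc_lt_iff_succ_le.mp hc)).symm
      _ ≤ κ k.castSucc := hκ (Fin.castSucc_le_succ k)
  · exact H.lt_last.le
  · exact (H.eq_of_gt i hc).le

lemma noSquare (H : IsRimHook ν κ b c) (hν : Antitone ν) (hκ : Antitone κ) :
    NoSquare (cellsF κ \ cellsF ν) := by
  refine noSquare_cellsF_sdiff fun k => ?_
  by_cases hb : k.castSucc < b
  · rw [H.eq_of_lt _ hb]
    exact (hκ (Fin.castSucc_le_succ k)).trans (Nat.le_succ _)
  by_cases hc : c < k.succ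
  · rw [← H.eq_of_gt _ hc]
    exact (hν (Fin.castSucc_le_succ k)).trans (Nat.le_succ _)
  exact (H.succ_eq k (not_lt.mp hb) (not_lt.mp hc)).le

lemma reflTransGen_to_lastRow_start (H : IsRimHook ν κ b c) (hν : Antitone ν) (a : Fin (n + 1))
    (hba : b ≤ a) (hac : a ≤ c) {j : ℕ} (hj : ν a < j) (hjκ : j ≤ κ a) :
    Relation.ReflTransGen (fun x y => y ∈ cellsF κ \ cellsF ν ∧ Adj x y)
      ((a : ℕ) + 1, j) ((c : ℕ) + 1, ν c + 1) := by
  induction a using Fin.reverseInduction generalizing j with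
  | last =>
    obtain rfl : c = Fin.last n := le_antisymm (Fin.le_last c) hac
    exact reflTransGen_row_cellsF_sdiff _ hj hjκ
  | cast k ih =>
    rcases hac.eq_or_lt with rfl | hlt
    · exact reflTransGen_row_cellsF_sdiff _ hj hjκ
    have hlink := H.succ_eq k hba (Fin.castSucc_lt_iff_succ_le.mp hlt)
    have hdown : ((k.succ : ℕ) + 1, ν k.castSucc + 1) ∈ cellsF κ \ cellsF ν :=
      mk_mem_cellsF_sdiff.mpr ⟨Nat.lt_succ_of_le (hν (Fin.castSucc_le_succ k)), hlink.ge⟩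
    refine (reflTransGen_row_cellsF_sdiff _ hj hjκ).trans (.head ⟨hdown, ?_⟩ ?_)
    · exact Or.inr ⟨rfl, Or.inr (by simp)⟩
    · exact ih (hba.trans (Fin.castSucc_le_succ k)) (Fin.castSucc_lt_iff_succ_le.mp hlt)
        (Nat.lt_succ_of_le (hν (Fin.castSucc_le_succ k))) hlink.ge

lemma isConnectedDiagram (H : IsRimHook ν κ b c) (hν : Antitone ν) :
    IsConnectedDiagram (cellsF κ \ cellsF ν) := by
  refine isConnectedDiagram_of_forall_reflTransGen ((c : ℕ) + 1, ν c + 1) fun p hp => ?_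
  obtain ⟨a, hrow, hlt, hle⟩ := mem_cellsF_sdiff.mp hp
  obtain ⟨hba, hac⟩ := H.mem_Icc_of_lt (hlt.trans_le hle)
  rw [← Prod.mk.eta (p := p), hrow]
  exact H.reflTransGen_to_lastRow_start hν a hba hac hlt hle

lemma of_betaNum_succAbove {s : ℤ} (hν : Antitone ν) (hκ : Antitone κ)
    (hlt : betaNum s ν c < betaNum s κ b)
    (hsucc : ∀ k, betaNum s ν (c.succAbove k) = betaNum s κ (b.succAbove k)) :
    IsRimHook ν κ b c := by
  have hA := betaNum_strictAnti s hν
  have hB := betaNum_strictAnti s hκ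
  have hbc : b ≤ c := by
    by_contra! hcb
    obtain ⟨k, rfl⟩ := Fin.exists_castSucc_eq.mpr (hcb.trans_le (Fin.le_last b)).ne
    have := hsucc k
    rw [Fin.succAbove_castSucc_self, Fin.succAbove_of_castSucc_lt _ _ hcb] at this
    have := hA (Fin.castSucc_lt_succ (i := k))
    have := hB hcb
    omega
  constructor
  · intro i hi
    obtain ⟨k, rfl⟩ := Fin.exists_castSucc_eq.mpr (hi.trans_le (Fin.le_last b)).ne
    have := hsucc k
    rw [Fin.succAbove_of_castSucc_lt _ _ (hi.trans_le hbc), Fin.succAbove_of_castSucc_lt _ _ hi]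
      at this
    simp only [betaNum] at this
    omega
  · intro i hi
    obtain ⟨k, rfl⟩ := Fin.exists_succ_eq.mpr (Fin.ne_zero_of_lt hi)
    have hck : c ≤ k.castSucc := Fin.le_castSucc_iff.mpr hi
    have := hsucc k
    rw [Fin.succAbove_of_le_castSucc _ _ hck, Fin.succAbove_of_le_castSucc _ _ (hbc.trans hck)]
      at this
    simp only [betaNum] at this
    omega
  · intro k hbk hkc
    have := hsucc k
    rw [Fin.succAbove_of_castSucc_lt _ _ (Fin.castSucc_lt_iff_succ_le.mpr hkc),
      Fin.succAbove_of_le_castSucc _ _ hbk] at this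
    simp only [betaNum, Fin.val_castSucc, Fin.val_succ] at this
    omega
  · suffices betaNum s ν c < betaNum s κ c by simp only [betaNum] at this; omega
    rcases hbc.eq_or_lt with rfl | hbc
    · exact hlt
    obtain ⟨k, rfl⟩ := Fin.exists_succ_eq.mpr (Fin.ne_zero_of_lt hbc)
    have := hsucc k
    rw [Fin.succAbove_succ_self, Fin.succAbove_of_le_castSucc _ _ (Fin.le_castSucc_iff.mpr hbc)]
      at this
    exact this ▸ hA (Fin.castSucc_lt_succ (i := k))

end IsRimHook

lemma sum_add_eq_sum_of_betaNum_succAbove {n : ℕ} {s : ℤ} {ν κ : Fin (n + 1) → ℕ}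
    {b c : Fin (n + 1)} {h : ℕ} (hc : betaNum s ν c = betaNum s κ b - h)
    (hsucc : ∀ k, betaNum s ν (c.succAbove k) = betaNum s κ (b.succAbove k)) :
    ∑ i, ν i + h = ∑ i, κ i := by
  have hsum : ∑ i, betaNum s ν i + h = ∑ i, betaNum s κ i := by
    rw [Fin.sum_univ_succAbove _ c, Fin.sum_univ_succAbove _ b, hc]
    simp only [hsucc]
    ring
  simp only [betaNum, Finset.sum_sub_distrib, Finset.sum_add_distrib] at hsum
  zify
  linarith

/-- If the β-numbers of ν are obtained from those of κ by replacing β_b with β_b - h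
(all r resulting integers distinct), then ν ⊆ κ and κ/ν is a ribbon of length h. -/
theorem stmt6 (r : ℕ) (s : ℤ) (ν κ : Fin r → ℕ) (hν : Antitone ν) (hκ : Antitone κ)
    (b : Fin r) (h : ℕ) (hh : 0 < h)
    (hdistinct : ∀ j : Fin r, j ≠ b → betaNum s κ j ≠ betaNum s κ b - (h : ℤ))
    (hβ : betaFinset s ν =
      insert (betaNum s κ b - (h : ℤ)) ((betaFinset s κ).erase (betaNum s κ b))) :
    cellsF ν ⊆ cellsF κ ∧ IsRibbon (cellsF κ \ cellsF ν) ∧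
      (cellsF κ \ cellsF ν).ncard = h := by
  obtain _ | n := r
  · exact b.elim0
  have hnew : betaNum s κ b - h ∉ betaFinset s κ := by
    simp only [betaFinset, Finset.mem_image, Finset.mem_univ, true_and, not_exists]
    intro j hj
    rcases eq_or_ne j b with rfl | hjb
    · omega
    · exact hdistinct j hjb hj
  obtain ⟨c, hc⟩ : ∃ c, betaNum s ν c = betaNum s κ b - h := by
    have hmem : betaNum s κ b - h ∈ betaFinset s ν := hβ ▸ Finset.mem_insert_self _ _
    simpa [betaFinset] using hmem
  have hsucc := comp_succAbove_eq_of_erase_eq (c := c) (b := b) (betaNum_strictAnti s hν)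
    (betaNum_strictAnti s hκ) (by
      rw [hc, ← betaFinset, hβ, Finset.erase_insert fun hmem => hnew (Finset.mem_of_mem_erase hmem)]
      rfl)
  have H : IsRimHook ν κ b c := .of_betaNum_succAbove hν hκ (by omega) (congrFun hsucc)
  have hsub := cellsF_subset_cellsF (H.le hκ)
  have hcard : (cellsF κ \ cellsF ν).ncard = h := by
    have := Set.ncard_sdiff_add_ncard_of_subset hsub (cellsF_finite κ)
    rw [ncard_cellsF, ncard_cellsF] at this
    have := sum_add_eq_sum_of_betaNum_succAbove hc (congrFun hsucc)
    omega
  refine ⟨hsub, ⟨Set.nonempty_of_ncard_ne_zero (hcard ▸ hh.ne'), H.isConnectedDiagram hν,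
    H.noSquare hν hκ⟩, hcard⟩
end

section
/- Let ν ⊆ κ be partitions with at most r parts such that ρ := κ/ν is a ribbon. Let σ be the permutation that sorts the sequence (β_1,...,β_{b-1}, β_b - h, β_{b+1},...,β_r) into decreasing order, where (β_1,...,β_r) = β_r(κ), b is the row of the tail of ρ, and h is the length of ρ. Then the length of σ (number of inversions) equals the height of ρ, i.e., the difference between the row index of the head of ρ and the row index of the tail of ρ. -/
/-! The cells of a skew shape `κ/ν` have distinct contents `j - i` (two cells on one diagonal would
span a 2×2 block), and along a connected diagram the content moves in steps of `±1`; hence the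
contents of the ribbon fill the interval from the head to the tail, and `h = c(tail) - c(head) + 1`.
With `tl = (b+1, κ_b)` this gives `β_b - h = s + c(head)`, a value that lies strictly below `β_i`
exactly for the rows `i` up to the head row `a`. Sorting therefore moves the modified entry from
position `b` to position `a`, past the `a - b` entries `β_{b+1}, …, β_a`. -/

theorem Relation.ReflTransGen.exists_apply_eq {α : Type*} {R : α → α → Prop} {f : α → ℤ}
    (hR : ∀ u v, R u v → f v ≤ f u + 1) {x y : α} (hxy : Relation.ReflTransGen R x y)
    {t : ℤ} (hxt : f x ≤ t) (hty : t ≤ f y) : ∃ u, Relation.ReflTransGen R x u ∧ f u = t := by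
  induction hxy with
  | refl => exact ⟨x, .refl, le_antisymm hxt hty⟩
  | @tail u v hxu huv ih =>
    by_cases htu : t ≤ f u
    · exact ih htu
    · exact ⟨v, hxu.tail huv, le_antisymm (by linarith [hR u v huv]) hty⟩

section Inversions

variable {ι α : Type*} [Fintype ι] [LinearOrder ι] [LinearOrder α]

theorem card_inversions_eq_card_ascents {σ : Equiv.Perm ι} {g : ι → α}
    (hg : StrictAnti (g ∘ σ)) :
    (Finset.univ.filter fun p : ι × ι => p.1 < p.2 ∧ σ p.2 < σ p.1).card =
      (Finset.univ.filter fun p : ι × ι => p.1 < p.2 ∧ g p.1 < g p.2).card := by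
  refine Finset.card_nbij' (fun p => (σ p.2, σ p.1)) (fun p => (σ.symm p.2, σ.symm p.1))
    ?_ ?_ (fun _ _ => by simp) (fun _ _ => by simp)
  · rintro ⟨p, q⟩ hpq
    simp only [Finset.coe_filter, Finset.mem_univ, true_and, Set.mem_ofPred_eq] at hpq ⊢
    exact ⟨hpq.2, hg hpq.1⟩
  · rintro ⟨x, y⟩ hxy
    simp only [Finset.coe_filter, Finset.mem_univ, true_and, Set.mem_ofPred_eq] at hxy ⊢
    refine ⟨hg.lt_iff_gt.mp ?_, by simpa using hxy.1⟩
    simpa using hxy.2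

theorem card_ascents_ite_eq_card_Ioc [LocallyFiniteOrder ι] {B : ι → α} (hB : StrictAnti B)
    {a b : ι} (hba : b ≤ a) {c : α} (hc : ∀ j, c < B j ↔ j ≤ a) :
    (Finset.univ.filter fun p : ι × ι =>
        p.1 < p.2 ∧ (if p.1 = b then c else B p.1) < (if p.2 = b then c else B p.2)).card =
      (Finset.Ioc b a).card := by
  rw [← Finset.card_image_of_injective (Finset.Ioc b a) (Prod.mk_right_injective b)]
  refine congrArg Finset.card ?_
  ext ⟨i, j⟩
  simp only [Finset.mem_filter, Finset.mem_univ, true_and, Finset.mem_image, Finset.mem_Ioc,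
    Prod.mk.injEq]
  constructor
  · rintro ⟨hij, hg⟩
    by_cases hj : j = b
    · subst hj
      rw [if_neg hij.ne, if_pos rfl] at hg
      exact absurd ((hc i).mpr (hij.le.trans hba)) hg.not_gt
    by_cases hi : i = b
    · subst hi
      rw [if_pos rfl, if_neg hj] at hg
      exact ⟨j, ⟨hij, (hc j).mp hg⟩, rfl, rfl⟩
    · rw [if_neg hi, if_neg hj] at hg
      exact absurd (hB hij) hg.not_gt
  · rintro ⟨j, ⟨hbj, hja⟩, rfl, rfl⟩
    rw [if_pos rfl, if_neg hbj.ne']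
    exact ⟨hbj, (hc j).mpr hja⟩

end Inversions

def content (p : ℕ × ℕ) : ℤ := p.2 - p.1

section ConnectedDiagram

variable {θ : Set (ℕ × ℕ)} {hd tl : ℕ × ℕ}

theorem content_image_eq_Icc (hθ : IsConnectedDiagram θ)
    (hhd : hd ∈ θ) (hhdmin : ∀ x ∈ θ, content hd ≤ content x)
    (htl : tl ∈ θ) (htlmax : ∀ x ∈ θ, content x ≤ content tl) :
    content '' θ = Set.Icc (content hd) (content tl) := by
  refine subset_antisymm ?_ fun t ht => ?_
  · rintro _ ⟨x, hx, rfl⟩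
    exact ⟨hhdmin x hx, htlmax x hx⟩
  · have hstep : ∀ u v, v ∈ θ ∧ Adj u v → content v ≤ content u + 1 := by
      rintro u v ⟨-, huv⟩
      simp only [content, Adj] at huv ⊢
      omega
    obtain ⟨u, hu, rfl⟩ := (hθ hd hhd tl htl).exists_apply_eq hstep ht.1 ht.2
    refine ⟨u, ?_, rfl⟩
    rcases hu.cases_tail with rfl | ⟨w, -, hwu, -⟩
    · exact hhd
    · exact hwu

theorem ncard_eq_content_sub_add_one (hθ : IsConnectedDiagram θ) (hinj : Set.InjOn content θ)
    (hhd : hd ∈ θ) (hhdmin : ∀ x ∈ θ, content hd ≤ content x)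
    (htl : tl ∈ θ) (htlmax : ∀ x ∈ θ, content x ≤ content tl) :
    (θ.ncard : ℤ) = content tl - content hd + 1 := by
  rw [← hinj.ncard_image, content_image_eq_Icc hθ hhd hhdmin htl htlmax, ← Finset.coe_Icc,
    Set.ncard_coe_finset, Int.card_Icc, Int.toNat_of_nonneg (by linarith [hhdmin tl htl])]
  ring

end ConnectedDiagram

section SkewShape

variable {r : ℕ} {ν κ : Fin r → ℕ}

theorem mem_skew_iff {p : ℕ × ℕ} :
    p ∈ cellsF κ \ cellsF ν ↔ ∃ i : Fin r, p.1 = (i : ℕ) + 1 ∧ ν i < p.2 ∧ p.2 ≤ κ i := by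
  constructor
  · rintro ⟨⟨i, hi1, hi2, hi3⟩, hn⟩
    exact ⟨i, hi1, Nat.lt_of_not_le fun hle => hn ⟨i, hi1, hi2, hle⟩, hi3⟩
  · rintro ⟨i, hi1, hi2, hi3⟩
    refine ⟨⟨i, hi1, by omega, hi3⟩, ?_⟩
    rintro ⟨i', hi'1, -, hi'3⟩
    obtain rfl : i' = i := Fin.ext (by omega)
    omega

theorem mem_skew_of_between (hν : Antitone ν) (hκ : Antitone κ) {p q x : ℕ × ℕ}
    (hp : p ∈ cellsF κ \ cellsF ν) (hq : q ∈ cellsF κ \ cellsF ν)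
    (h₁ : p.1 ≤ x.1) (h₁' : x.1 ≤ q.1) (h₂ : p.2 ≤ x.2) (h₂' : x.2 ≤ q.2) :
    x ∈ cellsF κ \ cellsF ν := by
  obtain ⟨i, hi, hνi, -⟩ := mem_skew_iff.mp hp
  obtain ⟨k, hk, -, hκk⟩ := mem_skew_iff.mp hq
  have hx : x.1 - 1 < r := by omega
  have hik : i ≤ ⟨x.1 - 1, hx⟩ := Fin.le_iff_val_le_val.mpr (by simp only; omega)
  have hxk : ⟨x.1 - 1, hx⟩ ≤ k := Fin.le_iff_val_le_val.mpr (by simp only; omega)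
  exact mem_skew_iff.mpr ⟨⟨x.1 - 1, hx⟩, by simp only; omega,
    (hν hik).trans_lt (by omega), (by omega : x.2 ≤ κ k).trans (hκ hxk)⟩

theorem content_injOn_skew (hν : Antitone ν) (hκ : Antitone κ)
    (hsq : NoSquare (cellsF κ \ cellsF ν)) : Set.InjOn content (cellsF κ \ cellsF ν) := by
  have key : ∀ p ∈ cellsF κ \ cellsF ν, ∀ q ∈ cellsF κ \ cellsF ν,
      content p = content q → p.1 ≤ q.1 → p = q := by
    intro p hp q hq hpq hle
    simp only [content] at hpq
    by_contra hne
    have hlt : p.1 < q.1 := lt_of_le_of_ne hle fun h => hne (Prod.ext h (by omega))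
    -- the diagonal from `p` to `q` spans the 2×2 block with corner `p`
    have mem : ∀ i j, p.1 ≤ i → i ≤ p.1 + 1 → p.2 ≤ j → j ≤ p.2 + 1 →
        (i, j) ∈ cellsF κ \ cellsF ν := fun i j h₁ h₁' h₂ h₂' =>
      mem_skew_of_between hν hκ hp hq h₁ (by simp only; omega) h₂ (by simp only; omega)
    exact hsq ⟨p.1, p.2, mem _ _ le_rfl (by omega) le_rfl (by omega),
      mem _ _ (by omega) le_rfl le_rfl (by omega), mem _ _ le_rfl (by omega) (by omega) le_rfl,
      mem _ _ (by omega) le_rfl (by omega) le_rfl⟩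
  intro p hp q hq hpq
  rcases le_total p.1 q.1 with h | h
  · exact key p hp q hq hpq h
  · exact (key q hq p hp hpq.symm h).symm

theorem snd_eq_of_forall_content_le {tl : ℕ × ℕ} (htl : tl ∈ cellsF κ \ cellsF ν)
    (htlmax : ∀ x ∈ cellsF κ \ cellsF ν, content x ≤ content tl) {b : Fin r}
    (hb : tl.1 = (b : ℕ) + 1) : tl.2 = κ b := by
  obtain ⟨b', hb', hνb, hκb⟩ := mem_skew_iff.mp htl
  obtain rfl : b' = b := Fin.ext (by omega)
  have := htlmax ((b' : ℕ) + 1, κ b') (mem_skew_iff.mpr ⟨b', rfl, by omega, le_rfl⟩)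
  simp only [content] at this
  omega

theorem betaNum_strictAnti_s8 (hκ : Antitone κ) (s : ℤ) : StrictAnti (betaNum s κ) := by
  intro i j hij
  have := hκ hij.le
  have : (i : ℕ) < j := hij
  simp only [betaNum]
  omega

theorem lt_betaNum_iff_of_forall_content_ge (hν : Antitone ν) (hκ : Antitone κ) {hd : ℕ × ℕ}
    (hhd : hd ∈ cellsF κ \ cellsF ν) (hhdmin : ∀ x ∈ cellsF κ \ cellsF ν, content hd ≤ content x)
    {a : Fin r} (ha : hd.1 = (a : ℕ) + 1) (s : ℤ) (j : Fin r) :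
    s + content hd < betaNum s κ j ↔ j ≤ a := by
  obtain ⟨a', ha', hνa, hκa⟩ := mem_skew_iff.mp hhd
  obtain rfl : a' = a := Fin.ext (by omega)
  simp only [content, betaNum]
  constructor
  · intro hj
    by_contra! haj
    have haj' : (a' : ℕ) < j := haj
    have hcell : ((j : ℕ) + 1, hd.2) ∈ cellsF κ \ cellsF ν :=
      mem_skew_iff.mpr ⟨j, rfl, (hν haj.le).trans_lt hνa, by omega⟩
    have := hhdmin _ hcell
    simp only [content] at this
    omega
  · intro hja
    have := hκ hja
    have : (j : ℕ) ≤ a' := hja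
    omega

end SkewShape

theorem stmt8_general (r : ℕ) (s : ℤ) (ν κ : Fin r → ℕ) (hν : Antitone ν) (hκ : Antitone κ)
    (hrib : IsRibbon (cellsF κ \ cellsF ν))
    (h : ℕ) (hcard : (cellsF κ \ cellsF ν).ncard = h)
    (hd tl : ℕ × ℕ)
    (hhd : hd ∈ cellsF κ \ cellsF ν)
    (hhdmin : ∀ x ∈ cellsF κ \ cellsF ν, (hd.2 : ℤ) - hd.1 ≤ (x.2 : ℤ) - x.1)
    (htl : tl ∈ cellsF κ \ cellsF ν)
    (htlmax : ∀ x ∈ cellsF κ \ cellsF ν, (x.2 : ℤ) - x.1 ≤ (tl.2 : ℤ) - tl.1)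
    (b : Fin r) (hb : tl.1 = (b : ℕ) + 1)
    (σ : Equiv.Perm (Fin r))
    (hsort : StrictAnti (fun j : Fin r =>
      if σ j = b then betaNum s κ b - (h : ℤ) else betaNum s κ (σ j))) :
    ((Finset.univ : Finset (Fin r × Fin r)).filter
        (fun p => p.1 < p.2 ∧ σ p.2 < σ p.1)).card = hd.1 - tl.1 := by
  obtain ⟨a, ha, -, -⟩ := mem_skew_iff.mp hhd
  have hh : (h : ℤ) = content tl - content hd + 1 := hcard ▸
    ncard_eq_content_sub_add_one hrib.2.1 (content_injOn_skew hν hκ hrib.2.2) hhd hhdmin htl htlmax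
  have hc : betaNum s κ b - h = s + content hd := by
    rw [hh]
    simp only [content, betaNum]
    rw [snd_eq_of_forall_content_le htl htlmax hb, hb]
    push_cast
    ring
  have hsplit : ∀ j, betaNum s κ b - h < betaNum s κ j ↔ j ≤ a :=
    hc ▸ lt_betaNum_iff_of_forall_content_ge hν hκ hhd hhdmin ha s
  have hpos : content hd ≤ content tl := hhdmin tl htl
  have hba : b ≤ a := (hsplit b).mp (by linarith)
  rw [card_inversions_eq_card_ascents
      (g := fun i => if i = b then betaNum s κ b - h else betaNum s κ i) hsort,
    card_ascents_ite_eq_card_Ioc (betaNum_strictAnti_s8 hκ s) hba hsplit, Fin.card_Ioc, ha, hb]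
  omega

/-- The permutation sorting the modified β-sequence of κ (β_b replaced by β_b - h)
into decreasing order has length (number of inversions) equal to the height of the
ribbon ρ = κ/ν, i.e. (row of head) - (row of tail). -/
theorem stmt8 (r : ℕ) (s : ℤ) (ν κ : Fin r → ℕ) (hν : Antitone ν) (hκ : Antitone κ)
    (hsub : cellsF ν ⊆ cellsF κ)
    (hrib : IsRibbon (cellsF κ \ cellsF ν))
    (h : ℕ) (hcard : (cellsF κ \ cellsF ν).ncard = h)
    (hd tl : ℕ × ℕ)
    (hhd : hd ∈ cellsF κ \ cellsF ν)
    (hhdmin : ∀ x ∈ cellsF κ \ cellsF ν, (hd.2 : ℤ) - hd.1 ≤ (x.2 : ℤ) - x.1)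
    (htl : tl ∈ cellsF κ \ cellsF ν)
    (htlmax : ∀ x ∈ cellsF κ \ cellsF ν, (x.2 : ℤ) - x.1 ≤ (tl.2 : ℤ) - tl.1)
    (b : Fin r) (hb : tl.1 = (b : ℕ) + 1)
    (σ : Equiv.Perm (Fin r))
    (hsort : StrictAnti (fun j : Fin r =>
      if σ j = b then betaNum s κ b - (h : ℤ) else betaNum s κ (σ j))) :
    ((Finset.univ : Finset (Fin r × Fin r)).filter
        (fun p => p.1 < p.2 ∧ σ p.2 < σ p.1)).card = hd.1 - tl.1 :=
  stmt8_general r s ν κ hν hκ hrib h hcard hd tl hhd hhdmin htl htlmax b hb σ hsort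
end

section
/- Let ν ≠ κ be partitions of the same integer r such that ρ := ν/(ν∩κ) and ρ' := κ/(ν∩κ) are both ribbons. Then ρ and ρ' have the same length, and exactly one of the following holds: ν ◁ κ (ν is strictly dominated by κ) or κ ◁ ν. -/
/-!
The rows meeting `ν/(ν∩κ)` are the rows `i` with `κ i < ν i`; since a ribbon is connected and
a path of adjacent boxes changes row by at most one per step, these rows form an interval, and
likewise for the rows with `ν i < κ i`. Two disjoint intervals lie one before the other, so the
partial sums of `ν - κ` are monotone up to some row and then decrease to `0`: one of `ν`, `κ`
dominates the other. The two ribbons have equal size because `|ν| = |κ|`.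
-/

open Finset

lemma mem_cellsF_diff_cellsF_min {r : ℕ} (f g : Fin r → ℕ) (p : ℕ × ℕ) :
    p ∈ cellsF f \ cellsF (fun i => min (f i) (g i)) ↔
      ∃ i : Fin r, p.1 = (i : ℕ) + 1 ∧ g i < p.2 ∧ p.2 ≤ f i := by
  constructor
  · rintro ⟨⟨i, h1, h2, h3⟩, h4⟩
    refine ⟨i, h1, ?_, h3⟩
    by_contra! h
    exact h4 ⟨i, h1, h2, le_min h3 h⟩
  · rintro ⟨i, h1, h2, h3⟩
    refine ⟨⟨i, h1, by omega, h3⟩, ?_⟩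
    rintro ⟨j, hj1, -, hj3⟩
    obtain rfl : j = i := Fin.val_injective (by omega)
    exact absurd (hj3.trans (min_le_right _ _)) (by omega)

lemma ncard_cellsF_diff_cellsF_min {r : ℕ} (f g : Fin r → ℕ) :
    (cellsF f \ cellsF (fun i => min (f i) (g i))).ncard = ∑ i, (f i - g i) := by
  classical
  have hset : cellsF f \ cellsF (fun i => min (f i) (g i)) =
      ↑((univ : Finset (Fin r)).biUnion fun i => (Ioc (g i) (f i)).map
        ⟨fun y => ((i : ℕ) + 1, y), fun _ _ h => (Prod.mk.inj h).2⟩) := by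
    ext p
    simp only [mem_cellsF_diff_cellsF_min, coe_biUnion, coe_map, coe_Ioc, coe_univ,
      Set.mem_iUnion, Set.mem_image, Set.mem_Ioc, Set.mem_univ, exists_true_left]
    constructor
    · rintro ⟨i, h1, h2, h3⟩
      exact ⟨i, p.2, ⟨h2, h3⟩, Prod.ext h1.symm rfl⟩
    · rintro ⟨i, y, hy, rfl⟩
      exact ⟨i, rfl, hy⟩
  rw [hset, Set.ncard_coe_finset, card_biUnion]
  · simp
  · intro i _ j _ hij
    simp only [Function.onFun, disjoint_left, mem_map]
    rintro _ ⟨y, -, rfl⟩ ⟨y', -, h⟩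
    exact hij (Fin.val_injective (by simpa using (Prod.mk.inj h).1.symm))

lemma Finset.sum_tsub_eq_sum_tsub_of_sum_eq {ι : Type*} (s : Finset ι) {f g : ι → ℕ}
    (h : ∑ i ∈ s, f i = ∑ i ∈ s, g i) : ∑ i ∈ s, (f i - g i) = ∑ i ∈ s, (g i - f i) := by
  have hf : ∑ i ∈ s, (f i - g i) + ∑ i ∈ s, min (f i) (g i) = ∑ i ∈ s, f i := by
    rw [← sum_add_distrib]
    exact sum_congr rfl fun i _ => by omega
  have hg : ∑ i ∈ s, (g i - f i) + ∑ i ∈ s, min (f i) (g i) = ∑ i ∈ s, g i := by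
    rw [← sum_add_distrib]
    exact sum_congr rfl fun i _ => by omega
  omega

lemma exists_lt_of_sum_eq_of_ne {ι M : Type*} [Fintype ι] [AddCommMonoid M] [LinearOrder M]
    [IsOrderedCancelAddMonoid M] {f g : ι → M}
    (hsum : ∑ i, f i = ∑ i, g i) (hne : f ≠ g) : ∃ i, f i < g i := by
  by_contra! h
  exact hne (funext fun i => ((sum_eq_sum_iff_of_le fun j _ => h j).1 hsum.symm i
    (mem_univ i)).symm)

lemma exists_mem_fst_eq_of_reflTransGen {θ : Set (ℕ × ℕ)} {a b : ℕ × ℕ}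
    (h : Relation.ReflTransGen (fun x y => y ∈ θ ∧ Adj x y) a b) (ha : a ∈ θ) {m : ℕ}
    (ham : a.1 ≤ m) (hmb : m ≤ b.1) : ∃ c ∈ θ, c.1 = m := by
  induction h using Relation.ReflTransGen.head_induction_on with
  | refl => exact ⟨b, ha, le_antisymm ham hmb⟩
  | @head a c hac _ ih =>
    rcases ham.eq_or_lt with rfl | hlt
    · exact ⟨a, ha, rfl⟩
    · have hc : c.1 ≤ a.1 + 1 := by
        rcases hac.2 with ⟨h, _⟩ | ⟨_, h | h⟩ <;> omega
      exact ih hac.1 (by omega)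

lemma ordConnected_setOf_lt_of_isConnectedDiagram {r : ℕ} {f g : Fin r → ℕ}
    (h : IsConnectedDiagram (cellsF f \ cellsF (fun i => min (f i) (g i)))) :
    Set.OrdConnected {i | g i < f i} := by
  refine ⟨fun i hi l hl j ⟨hij, hjl⟩ => ?_⟩
  have hcell : ∀ k : Fin r, g k < f k →
      ((k : ℕ) + 1, f k) ∈ cellsF f \ cellsF (fun i => min (f i) (g i)) :=
    fun k hk => (mem_cellsF_diff_cellsF_min f g _).2 ⟨k, rfl, hk, le_rfl⟩
  obtain ⟨c, hc, hcj⟩ := exists_mem_fst_eq_of_reflTransGen (h _ (hcell i hi) _ (hcell l hl))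
    (hcell i hi) (m := (j : ℕ) + 1) (by simpa using hij) (by simpa using hjl)
  obtain ⟨k, hk, hgk, hkf⟩ := (mem_cellsF_diff_cellsF_min f g c).1 hc
  obtain rfl : k = j := Fin.val_injective (by omega)
  exact hgk.trans_le hkf

lemma Set.OrdConnected.forall_lt_or_forall_gt {α : Type*} [LinearOrder α] {s t : Set α}
    (hs : s.OrdConnected) (ht : t.OrdConnected) (hst : Disjoint s t) (hs₀ : s.Nonempty)
    (ht₀ : t.Nonempty) : (∀ x ∈ s, ∀ y ∈ t, x < y) ∨ (∀ x ∈ s, ∀ y ∈ t, y < x) := by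
  have key : ∀ {s t : Set α}, s.OrdConnected → t.OrdConnected → Disjoint s t →
      ∀ a ∈ s, ∀ b ∈ t, a < b → ∀ x ∈ s, ∀ y ∈ t, x < y := by
    intro s t hs ht hst a ha b hb hab x hx y hy
    have hne : ∀ {z}, z ∈ s → z ∈ t → False := fun hzs hzt =>
      hst.notMem_of_mem_left hzs hzt
    have hxb : x < b := lt_of_not_ge fun h => hne (hs.out ha hx ⟨hab.le, h⟩) hb
    have hay : a < y := lt_of_not_ge fun h => hne ha (ht.out hy hb ⟨h, hab.le⟩)
    exact lt_of_not_ge fun h => hne (hs.out ha hx ⟨hay.le, h⟩) hy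
  obtain ⟨a, ha⟩ := hs₀
  obtain ⟨b, hb⟩ := ht₀
  rcases lt_or_gt_of_ne (fun h : a = b => hst.notMem_of_mem_left ha (h ▸ hb)) with hab | hba
  · exact Or.inl (key hs ht hst a ha b hb hab)
  · exact Or.inr fun x hx y hy => key ht hs hst.symm b hb a ha hba y hy x hx

section Dominance

variable {r : ℕ} {ν κ : Fin r → ℕ}

lemma Dominates.antisymm (h₁ : Dominates ν κ) (h₂ : Dominates κ ν) : ν = κ := by
  have hpartial : ∀ k, ∑ i ∈ Iic k, ν i = ∑ i ∈ Iic k, κ i := fun k => by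
    simpa only [filter_ge_eq_Iic] using le_antisymm (h₁ k) (h₂ k)
  funext k
  induction k using WellFoundedLT.induction with
  | _ k ih =>
    have hk := hpartial k
    have hlt : ∑ j ∈ Iio k, ν j = ∑ j ∈ Iio k, κ j :=
      sum_congr rfl fun j hj => ih j (mem_Iio.1 hj)
    rw [← Iio_insert, sum_insert notMem_Iio_self, sum_insert notMem_Iio_self, hlt] at hk
    omega

lemma dominates_of_forall_lt (hsum : ∑ i, ν i = ∑ i, κ i)
    (hsep : ∀ a b, κ a < ν a → ν b < κ b → a < b) : Dominates κ ν := by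
  intro k
  by_cases hb : ∃ b ≤ k, ν b < κ b
  · obtain ⟨b, hbk, hb⟩ := hb
    have htail : ∑ i ∈ univ.filter (fun i => ¬ i ≤ k), ν i ≤
        ∑ i ∈ univ.filter (fun i => ¬ i ≤ k), κ i :=
      sum_le_sum fun i hi => le_of_not_gt fun h =>
        (mem_filter.1 hi).2 ((hsep i b h hb).le.trans hbk)
    have hν := sum_filter_add_sum_filter_not univ (fun i => i ≤ k) ν
    have hκ := sum_filter_add_sum_filter_not univ (fun i => i ≤ k) κ
    omega
  · push Not at hb
    exact sum_le_sum fun i hi => hb i (mem_filter.1 hi).2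

lemma dominates_or_dominates_of_isConnectedDiagram (hsum : ∑ i, ν i = ∑ i, κ i)
    (hne : ν ≠ κ)
    (hρ : IsConnectedDiagram (cellsF ν \ cellsF (fun i => min (ν i) (κ i))))
    (hρ' : IsConnectedDiagram (cellsF κ \ cellsF (fun i => min (κ i) (ν i)))) :
    Dominates ν κ ∨ Dominates κ ν := by
  rcases (ordConnected_setOf_lt_of_isConnectedDiagram hρ).forall_lt_or_forall_gt
      (ordConnected_setOf_lt_of_isConnectedDiagram hρ')
      (Set.disjoint_left.2 fun i (h : κ i < ν i) (h' : ν i < κ i) => h.asymm h')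
      (exists_lt_of_sum_eq_of_ne hsum.symm (Ne.symm hne))
      (exists_lt_of_sum_eq_of_ne hsum hne) with h | h
  · exact Or.inr (dominates_of_forall_lt hsum fun a b ha hb => h a ha b hb)
  · exact Or.inl (dominates_of_forall_lt hsum.symm fun a b ha hb => h b hb a ha)

end Dominance

theorem stmt10_general (r : ℕ) (ν κ : Fin r → ℕ)
    (hνsum : ∑ i, ν i = r) (hκsum : ∑ i, κ i = r) (hne : ν ≠ κ)
    (hρ : IsRibbon (cellsF ν \ cellsF (fun i => min (ν i) (κ i))))
    (hρ' : IsRibbon (cellsF κ \ cellsF (fun i => min (ν i) (κ i)))) :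
    (cellsF ν \ cellsF (fun i => min (ν i) (κ i))).ncard =
      (cellsF κ \ cellsF (fun i => min (ν i) (κ i))).ncard ∧
    Xor' (StrictlyDominates ν κ) (StrictlyDominates κ ν) := by
  have hmin : (fun i => min (ν i) (κ i)) = fun i => min (κ i) (ν i) :=
    funext fun i => min_comm _ _
  have hsum : ∑ i, ν i = ∑ i, κ i := hνsum.trans hκsum.symm
  rw [hmin] at hρ'
  refine ⟨?_, ?_⟩
  · rw [ncard_cellsF_diff_cellsF_min, hmin, ncard_cellsF_diff_cellsF_min]
    exact sum_tsub_eq_sum_tsub_of_sum_eq univ hsum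
  · have hanti : ¬ (Dominates ν κ ∧ Dominates κ ν) := fun h => hne (h.1.antisymm h.2)
    rcases dominates_or_dominates_of_isConnectedDiagram hsum hne hρ.2.1 hρ'.2.1 with h | h
    · exact Or.inl ⟨⟨h, hne⟩, fun h' => hanti ⟨h, h'.1⟩⟩
    · exact Or.inr ⟨⟨h, Ne.symm hne⟩, fun h' => hanti ⟨h'.1, h⟩⟩

/-- If ν ≠ κ are partitions of r such that ρ = ν/(ν∩κ) and ρ' = κ/(ν∩κ) are both
ribbons, then ρ and ρ' have the same length, and exactly one of ν ◁ κ, κ ◁ ν holds. -/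
theorem stmt10 (r : ℕ) (ν κ : Fin r → ℕ) (hν : Antitone ν) (hκ : Antitone κ)
    (hνsum : ∑ i, ν i = r) (hκsum : ∑ i, κ i = r) (hne : ν ≠ κ)
    (hρ : IsRibbon (cellsF ν \ cellsF (fun i => min (ν i) (κ i))))
    (hρ' : IsRibbon (cellsF κ \ cellsF (fun i => min (ν i) (κ i)))) :
    (cellsF ν \ cellsF (fun i => min (ν i) (κ i))).ncard =
      (cellsF κ \ cellsF (fun i => min (ν i) (κ i))).ncard ∧
    Xor' (StrictlyDominates ν κ) (StrictlyDominates κ ν) :=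
  stmt10_general r ν κ hνsum hκsum hne hρ hρ'
end

section
/- Let ν ≠ κ be partitions of r such that ρ := ν/(ν∩κ) and ρ' := κ/(ν∩κ) are ribbons. Let y, y' be the row numbers of the tail and head of ρ' respectively, and x', x the row numbers of the tail and head of ρ respectively. Then ν ◁ κ if and only if y ≤ y' < x' ≤ x, and κ ◁ ν if and only if x' ≤ x < y ≤ y'. -/
namespace Stmt11Aux

variable {r : ℕ}

def rhoSet (f g : Fin r → ℕ) : Set (ℕ × ℕ) :=
  cellsF f \ cellsF (fun i => min (f i) (g i))

lemma mem_rho (f g : Fin r → ℕ) (p : ℕ × ℕ) :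
    p ∈ rhoSet f g ↔ ∃ i : Fin r, p.1 = (i : ℕ) + 1 ∧ g i < p.2 ∧ p.2 ≤ f i := by
  constructor
  · rintro ⟨⟨i, h1, h2, h3⟩, hnot⟩
    refine ⟨i, h1, ?_, h3⟩
    by_contra h
    refine hnot ⟨i, h1, h2, ?_⟩
    show p.2 ≤ min (f i) (g i)
    omega
  · rintro ⟨i, h1, h2, h3⟩
    refine ⟨⟨i, h1, by omega, h3⟩, ?_⟩
    rintro ⟨j, hj1, hj2, hj3⟩
    have hj3' : p.2 ≤ min (f j) (g j) := hj3
    have hji : j = i := Fin.ext (by omega)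
    subst hji
    omega

def rowSet (f g : Fin r → ℕ) : Finset (Fin r) := Finset.univ.filter (fun i => g i < f i)

lemma mem_rowSet {f g : Fin r → ℕ} {i : Fin r} : i ∈ rowSet f g ↔ g i < f i := by
  simp [rowSet]

lemma rowSet_nonempty (f g : Fin r → ℕ) (h : (rhoSet f g).Nonempty) :
    (rowSet f g).Nonempty := by
  obtain ⟨p, hp⟩ := h
  obtain ⟨i, _, h2, h3⟩ := (mem_rho f g p).1 hp
  exact ⟨i, mem_rowSet.2 (by omega)⟩

lemma path_rows {θ : Set (ℕ × ℕ)} {a b : ℕ × ℕ}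
    (h : Relation.ReflTransGen (fun x y => y ∈ θ ∧ Adj x y) a b) (ha : a ∈ θ) :
    ∀ t : ℕ, (a.1 ≤ t ∧ t ≤ b.1) ∨ (b.1 ≤ t ∧ t ≤ a.1) → ∃ c ∈ θ, c.1 = t := by
  induction h with
  | refl => exact fun t ht => ⟨a, ha, by omega⟩
  | @tail b c hab hbc ih =>
    intro t ht
    obtain ⟨hc, hadj⟩ := hbc
    have hrow : c.1 = b.1 ∨ c.1 = b.1 + 1 ∨ b.1 = c.1 + 1 := by
      rcases hadj with ⟨h1, -⟩ | ⟨-, h1 | h1⟩ <;> omega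
    by_cases h' : (a.1 ≤ t ∧ t ≤ b.1) ∨ (b.1 ≤ t ∧ t ≤ a.1)
    · exact ih t h'
    · exact ⟨c, hc, by omega⟩

lemma rowSet_interval (f g : Fin r → ℕ) (hconn : IsConnectedDiagram (rhoSet f g))
    {i1 i2 t : Fin r} (h1 : i1 ∈ rowSet f g) (h2 : i2 ∈ rowSet f g)
    (ht1 : (i1 : ℕ) ≤ t) (ht2 : (t : ℕ) ≤ i2) : t ∈ rowSet f g := by
  have hm1 : g i1 < f i1 := mem_rowSet.1 h1
  have hm2 : g i2 < f i2 := mem_rowSet.1 h2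
  have ha : ((i1 : ℕ) + 1, f i1) ∈ rhoSet f g := (mem_rho f g _).2 ⟨i1, rfl, hm1, le_rfl⟩
  have hb : ((i2 : ℕ) + 1, f i2) ∈ rhoSet f g := (mem_rho f g _).2 ⟨i2, rfl, hm2, le_rfl⟩
  obtain ⟨c, hc, hct⟩ := path_rows (hconn _ ha _ hb) ha ((t : ℕ) + 1) (by left; omega)
  obtain ⟨j, hj1, hj2, hj3⟩ := (mem_rho f g c).1 hc
  have hjt : j = t := Fin.ext (by omega)
  subst hjt
  exact mem_rowSet.2 (by omega)

lemma head_row (f g : Fin r → ℕ) (hg : Antitone g) (hS : (rowSet f g).Nonempty)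
    {hd : ℕ × ℕ} (hhd : hd ∈ rhoSet f g)
    (hmin : ∀ p ∈ rhoSet f g, (hd.2 : ℤ) - hd.1 ≤ (p.2 : ℤ) - p.1) :
    hd.1 = ((rowSet f g).max' hS : ℕ) + 1 := by
  obtain ⟨i, h1, h2, h3⟩ := (mem_rho f g _).1 hhd
  have hiS : i ∈ rowSet f g := mem_rowSet.2 (by omega)
  set M := (rowSet f g).max' hS with hM
  have hiM : i ≤ M := Finset.le_max' _ _ hiS
  have hMlt : g M < f M := mem_rowSet.1 (Finset.max'_mem _ _)
  rcases eq_or_lt_of_le hiM with he | hlt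
  · rw [h1, he]
  · exfalso
    have hq : ((M : ℕ) + 1, g M + 1) ∈ rhoSet f g :=
      (mem_rho f g _).2 ⟨M, rfl, by omega, by omega⟩
    have hc := hmin _ hq
    have hgi : g M ≤ g i := hg (le_of_lt hlt)
    have hii : (i : ℕ) < M := hlt
    push_cast at hc
    omega

lemma tail_row (f g : Fin r → ℕ) (hf : Antitone f) (hS : (rowSet f g).Nonempty)
    {tl : ℕ × ℕ} (htl : tl ∈ rhoSet f g)
    (hmax : ∀ p ∈ rhoSet f g, (p.2 : ℤ) - p.1 ≤ (tl.2 : ℤ) - tl.1) :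
    tl.1 = ((rowSet f g).min' hS : ℕ) + 1 := by
  obtain ⟨i, h1, h2, h3⟩ := (mem_rho f g _).1 htl
  have hiS : i ∈ rowSet f g := mem_rowSet.2 (by omega)
  set m := (rowSet f g).min' hS with hm
  have him : m ≤ i := Finset.min'_le _ _ hiS
  have hmlt : g m < f m := mem_rowSet.1 (Finset.min'_mem _ _)
  rcases eq_or_lt_of_le him with he | hlt
  · rw [h1, ← he]
  · exfalso
    have hq : ((m : ℕ) + 1, f m) ∈ rhoSet f g :=
      (mem_rho f g _).2 ⟨m, rfl, by omega, le_rfl⟩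
    have hc := hmax _ hq
    have hfi : f i ≤ f m := hf (le_of_lt hlt)
    have hii : (m : ℕ) < i := hlt
    push_cast at hc
    omega

lemma dom_of_split (F : Fin r → ℤ) (hsum : ∑ i, F i = 0) (m : ℕ)
    (hpos : ∀ i : Fin r, 0 < F i → (i : ℕ) < m)
    (hneg : ∀ i : Fin r, F i < 0 → m ≤ (i : ℕ)) (k : Fin r) :
    0 ≤ ∑ i ∈ Finset.univ.filter (· ≤ k), F i := by
  by_cases hk : (k : ℕ) < m
  · apply Finset.sum_nonneg
    intro i hi
    simp only [Finset.mem_filter] at hi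
    by_contra h
    have h1 := hneg i (by omega)
    have h2 : (i : ℕ) ≤ (k : ℕ) := hi.2
    omega
  · have hsplit := Finset.sum_filter_add_sum_filter_not Finset.univ (· ≤ k) F
    rw [hsum] at hsplit
    have hle : ∑ i ∈ Finset.univ.filter (fun i => ¬ (· ≤ k) i), F i ≤ 0 := by
      apply Finset.sum_nonpos
      intro i hi
      simp only [Finset.mem_filter] at hi
      by_contra h
      have h1 := hpos i (by omega)
      have h2 : (k : ℕ) < (i : ℕ) := lt_of_not_ge hi.2
      omega
    linarith

lemma dominates_of (ν κ : Fin r → ℕ) (hsum : ∑ i, ν i = ∑ i, κ i)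
    (hS : (rowSet ν κ).Nonempty) (hS' : (rowSet κ ν).Nonempty)
    (hA : (((rowSet κ ν).max' hS') : ℕ) < (((rowSet ν κ).min' hS) : ℕ)) :
    ∀ k : Fin r, ∑ i ∈ Finset.univ.filter (· ≤ k), ν i ≤ ∑ i ∈ Finset.univ.filter (· ≤ k), κ i := by
  intro k
  have hsum0 : ∑ i, ((κ i : ℤ) - ν i) = 0 := by
    rw [Finset.sum_sub_distrib]
    have h1 : ((∑ i, κ i : ℕ) : ℤ) = ((∑ i, ν i : ℕ) : ℤ) := by rw [hsum]
    push_cast at h1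
    linarith
  have hpos : ∀ i : Fin r, 0 < (κ i : ℤ) - ν i → (i : ℕ) < (((rowSet ν κ).min' hS) : ℕ) := by
    intro i hi
    have hiS' : i ∈ rowSet κ ν := mem_rowSet.2 (by omega)
    have h2 : (i : ℕ) ≤ (((rowSet κ ν).max' hS') : ℕ) := Finset.le_max' _ _ hiS'
    omega
  have hneg : ∀ i : Fin r, (κ i : ℤ) - ν i < 0 → (((rowSet ν κ).min' hS) : ℕ) ≤ (i : ℕ) := by
    intro i hi
    have hiS : i ∈ rowSet ν κ := mem_rowSet.2 (by omega)
    exact Finset.min'_le _ _ hiS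
  have h0 := dom_of_split (fun i => (κ i : ℤ) - ν i) hsum0 _ hpos hneg k
  have h1 : (∑ i ∈ Finset.univ.filter (· ≤ k), (ν i : ℤ)) ≤
      ∑ i ∈ Finset.univ.filter (· ≤ k), (κ i : ℤ) := by
    rw [← sub_nonneg, ← Finset.sum_sub_distrib]
    exact h0
  exact_mod_cast h1

lemma not_dominates_of (ν κ : Fin r → ℕ)
    (hS : (rowSet ν κ).Nonempty) (hS' : (rowSet κ ν).Nonempty)
    (hA : (((rowSet κ ν).max' hS') : ℕ) < (((rowSet ν κ).min' hS) : ℕ)) :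
    ¬ ∀ k : Fin r, ∑ i ∈ Finset.univ.filter (· ≤ k), κ i ≤ ∑ i ∈ Finset.univ.filter (· ≤ k), ν i := by
  intro hdom
  set jM := (rowSet κ ν).max' hS' with hjM
  have hk := hdom jM
  have hlt : ∑ i ∈ Finset.univ.filter (· ≤ jM), ν i <
      ∑ i ∈ Finset.univ.filter (· ≤ jM), κ i := by
    apply Finset.sum_lt_sum
    · intro i hi
      simp only [Finset.mem_filter] at hi
      by_contra h
      have hiS : i ∈ rowSet ν κ := mem_rowSet.2 (by omega)
      have hh1 : (((rowSet ν κ).min' hS) : ℕ) ≤ (i : ℕ) := Finset.min'_le _ _ hiS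
      have hh2 : (i : ℕ) ≤ (jM : ℕ) := hi.2
      omega
    · exact ⟨jM, by simp, mem_rowSet.1 (Finset.max'_mem _ _)⟩
  omega

end Stmt11Aux

open Stmt11Aux
/-- With ρ = ν/(ν∩κ) and ρ' = κ/(ν∩κ) ribbons, x (resp. x') the row of the head
(resp. tail) of ρ and y' (resp. y) the row of the head (resp. tail) of ρ':
ν ◁ κ iff y ≤ y' < x' ≤ x, and κ ◁ ν iff x' ≤ x < y ≤ y'. -/
theorem stmt11 (r : ℕ) (ν κ : Fin r → ℕ) (hν : Antitone ν) (hκ : Antitone κ)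
    (hνsum : ∑ i, ν i = r) (hκsum : ∑ i, κ i = r) (hne : ν ≠ κ)
    (hρ : IsRibbon (cellsF ν \ cellsF (fun i => min (ν i) (κ i))))
    (hρ' : IsRibbon (cellsF κ \ cellsF (fun i => min (ν i) (κ i))))
    (hdρ tlρ hdρ' tlρ' : ℕ × ℕ)
    (hhdρ : hdρ ∈ cellsF ν \ cellsF (fun i => min (ν i) (κ i)))
    (hhdρmin : ∀ p ∈ cellsF ν \ cellsF (fun i => min (ν i) (κ i)),
      (hdρ.2 : ℤ) - hdρ.1 ≤ (p.2 : ℤ) - p.1)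
    (htlρ : tlρ ∈ cellsF ν \ cellsF (fun i => min (ν i) (κ i)))
    (htlρmax : ∀ p ∈ cellsF ν \ cellsF (fun i => min (ν i) (κ i)),
      (p.2 : ℤ) - p.1 ≤ (tlρ.2 : ℤ) - tlρ.1)
    (hhdρ' : hdρ' ∈ cellsF κ \ cellsF (fun i => min (ν i) (κ i)))
    (hhdρ'min : ∀ p ∈ cellsF κ \ cellsF (fun i => min (ν i) (κ i)),
      (hdρ'.2 : ℤ) - hdρ'.1 ≤ (p.2 : ℤ) - p.1)
    (htlρ' : tlρ' ∈ cellsF κ \ cellsF (fun i => min (ν i) (κ i)))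
    (htlρ'max : ∀ p ∈ cellsF κ \ cellsF (fun i => min (ν i) (κ i)),
      (p.2 : ℤ) - p.1 ≤ (tlρ'.2 : ℤ) - tlρ'.1)
    (x x' y y' : ℕ)
    (hx : hdρ.1 = x) (hx' : tlρ.1 = x') (hy' : hdρ'.1 = y') (hy : tlρ'.1 = y) :
    (StrictlyDominates ν κ ↔ (y ≤ y' ∧ y' < x' ∧ x' ≤ x)) ∧
    (StrictlyDominates κ ν ↔ (x' ≤ x ∧ x < y ∧ y ≤ y')) := by
  have hmincomm : (fun i => min (ν i) (κ i)) = (fun i => min (κ i) (ν i)) := by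
    funext i; exact min_comm _ _
  rw [hmincomm] at hρ' hhdρ' hhdρ'min htlρ' htlρ'max
  have hS : (rowSet ν κ).Nonempty := rowSet_nonempty ν κ hρ.1
  have hS' : (rowSet κ ν).Nonempty := rowSet_nonempty κ ν hρ'.1
  set im := (rowSet ν κ).min' hS with him
  set iM := (rowSet ν κ).max' hS with hiM
  set jm := (rowSet κ ν).min' hS' with hjm
  set jM := (rowSet κ ν).max' hS' with hjM
  have hxv : x = (iM : ℕ) + 1 := by rw [← hx]; exact head_row ν κ hκ hS hhdρ hhdρmin
  have hx'v : x' = (im : ℕ) + 1 := by rw [← hx']; exact tail_row ν κ hν hS htlρ htlρmax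
  have hy'v : y' = (jM : ℕ) + 1 := by rw [← hy']; exact head_row κ ν hν hS' hhdρ' hhdρ'min
  have hyv : y = (jm : ℕ) + 1 := by rw [← hy]; exact tail_row κ ν hκ hS' htlρ' htlρ'max
  have h1 : (im : ℕ) ≤ (iM : ℕ) := Fin.le_def.1 (Finset.min'_le _ _ (Finset.max'_mem _ _))
  have h2 : (jm : ℕ) ≤ (jM : ℕ) := Fin.le_def.1 (Finset.min'_le _ _ (Finset.max'_mem _ _))
  have hsum : ∑ i, ν i = ∑ i, κ i := by rw [hνsum, hκsum]
  have hcase : (jM : ℕ) < (im : ℕ) ∨ (iM : ℕ) < (jm : ℕ) := by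
    by_contra hcon
    push_neg at hcon
    obtain ⟨hc1, hc2⟩ := hcon
    have hiMr : (iM : ℕ) < r := iM.isLt
    set tF : Fin r := ⟨max (im : ℕ) (jm : ℕ), by omega⟩ with htF
    have htS : tF ∈ rowSet ν κ :=
      rowSet_interval ν κ hρ.2.1 (Finset.min'_mem _ _) (Finset.max'_mem _ _)
        (le_max_left _ _) (by show max (im : ℕ) (jm : ℕ) ≤ (iM : ℕ); omega)
    have htS' : tF ∈ rowSet κ ν :=
      rowSet_interval κ ν hρ'.2.1 (Finset.min'_mem _ _) (Finset.max'_mem _ _)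
        (le_max_right _ _) (by show max (im : ℕ) (jm : ℕ) ≤ (jM : ℕ); omega)
    have e1 := mem_rowSet.1 htS
    have e2 := mem_rowSet.1 htS'
    omega
  rcases hcase with hA | hB
  · have P1 : StrictlyDominates ν κ := ⟨dominates_of ν κ hsum hS hS' hA, hne⟩
    have P2 : ¬ StrictlyDominates κ ν := fun h => not_dominates_of ν κ hS hS' hA h.1
    refine ⟨⟨fun _ => by omega, fun _ => P1⟩, ⟨fun h => absurd h P2, fun h => by omega⟩⟩
  · have P1 : StrictlyDominates κ ν :=
      ⟨dominates_of κ ν hsum.symm hS' hS hB, fun hh => hne hh.symm⟩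
    have P2 : ¬ StrictlyDominates ν κ := fun h => not_dominates_of κ ν hS' hS hB h.1
    refine ⟨⟨fun h => absurd h P2, fun h => by omega⟩, ⟨fun _ => by omega, fun _ => P1⟩⟩
end

section
/- Let ξ = exp(2iπ/(nl)) and ν_℘ the (x-ξ)-adic valuation on ℂ(x). Let 1 ≤ d, d' ≤ l with d ≠ d', and a_1 = dn, a_3 = d'n, a_2, a_4 ∈ ℤ. Then for P(x) = ξ^{a_1} x^{a_2} - ξ^{a_3} x^{a_4}, one has ν_℘(P(x)) ≤ 1; moreover ν_℘(P(x)) = 1 if and only if a_1 + a_2 ≡ a_3 + a_4 (mod nl). -/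
/-!
Writing `a₂ = m + b` and `a₄ = m + c` with `m = min a₂ a₄`, the rational function is
`x^m · Q` with `Q = α X^b - β X^c`, `α = ξ^{dn} ≠ β = ξ^{d'n}` (as `ξ^n` is a primitive `l`-th
root of unity). Since `ξ ≠ 0`, `x` is a unit at `℘`, so `ν_℘(P)` is the multiplicity of `ξ` as a
root of `Q`. A double root would give `Q(ξ) = 0 = ξ Q'(ξ) = b α ξ^b - c β ξ^c`, forcing `b = c`
and then `α = β`; so the multiplicity is at most `1`, and it is `1` exactly when
`ξ^{dn+b} = ξ^{d'n+c}`, i.e. when `dn + a₂ ≡ d'n + a₄ (mod nl)`.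
-/

open Polynomial

theorem Nat.ModEq.eq_of_mem_Icc {l d d' : ℕ} (h : d ≡ d' [MOD l])
    (hd : d ∈ Set.Icc 1 l) (hd' : d' ∈ Set.Icc 1 l) : d = d' := by
  have hdvd : (l : ℤ) ∣ d' - d := Nat.modEq_iff_dvd.mp h
  have := Int.eq_zero_of_abs_lt_dvd hdvd (abs_lt.mpr ⟨by grind, by grind⟩)
  omega

theorem IsPrimitiveRoot.pow_eq_pow_iff_modEq {M : Type*} [CommMonoid M] {ζ : M} {k : ℕ}
    (hζ : IsPrimitiveRoot ζ k) (hk : k ≠ 0) {a b : ℕ} : ζ ^ a = ζ ^ b ↔ a ≡ b [MOD k] :=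
  hζ.eq_orderOf ▸ (hζ.isOfFinOrder hk).pow_eq_pow_iff_modEq

theorem IsPrimitiveRoot.injOn_pow_Icc {M : Type*} [CommMonoid M] {ζ : M} {k : ℕ}
    (hζ : IsPrimitiveRoot ζ k) : Set.InjOn (ζ ^ ·) (Set.Icc 1 k) := fun _ ha _ hb hab =>
  ((hζ.pow_eq_pow_iff_modEq (by grind)).mp hab).eq_of_mem_Icc ha hb

theorem Polynomial.rootMultiplicity_C_mul_X_pow_sub_C_mul_X_pow_le_one {R : Type*} [CommRing R]
    [IsDomain R] [CharZero R] {α β ξ : R} (hξ : ξ ≠ 0) (hαβ : α ≠ β) (b c : ℕ) :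
    (C α * X ^ b - C β * X ^ c).rootMultiplicity ξ ≤ 1 := by
  set p := C α * X ^ b - C β * X ^ c
  by_contra! h
  have hp : p ≠ 0 := by rintro hp; simp [hp] at h
  obtain ⟨hroot, hderiv⟩ := (one_lt_rootMultiplicity_iff_isRoot hp).mp h
  have hval : α * ξ ^ b = β * ξ ^ c := by simpa [p, sub_eq_zero] using hroot
  have hmul_pred : ∀ k : ℕ, (k : R) * ξ ^ (k - 1) * ξ = k * ξ ^ k := by
    rintro (_ | k) <;> simp [pow_succ, mul_assoc]
  have hderiv_val : (b : R) * (α * ξ ^ b) = c * (β * ξ ^ c) := by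
    have : α * (b * ξ ^ (b - 1)) = β * (c * ξ ^ (c - 1)) := by
      simpa [p, sub_eq_zero, derivative_X_pow] using hderiv
    linear_combination ξ * this - α * hmul_pred b + β * hmul_pred c
  have hzero : ((b : R) - c) * (α * ξ ^ b) = 0 := by
    linear_combination hderiv_val - (c : R) * hval
  rcases mul_eq_zero.mp hzero with hbc | hαξ
  · have hbc : b = c := by exact_mod_cast sub_eq_zero.mp hbc
    subst hbc
    exact hαβ (mul_right_cancel₀ (pow_ne_zero _ hξ) hval)
  · have hα : α = 0 := (mul_eq_zero.mp hαξ).resolve_right (pow_ne_zero _ hξ)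
    have hβ : β = 0 := (mul_eq_zero.mp (hval ▸ hαξ)).resolve_right (pow_ne_zero _ hξ)
    exact hαβ (hα.trans hβ.symm)

theorem Polynomial.C_mul_X_pow_sub_C_mul_X_pow_ne_zero {R : Type*} [CommRing R] {α β : R}
    (hαβ : α ≠ β) (b c : ℕ) : C α * X ^ b - C β * X ^ c ≠ 0 := fun h =>
  hαβ <| sub_eq_zero.mp <| by simpa using congrArg (eval 1) h

namespace IsDedekindDomain.HeightOneSpectrum

variable {K : Type*} [Field K] {v : HeightOneSpectrum K[X]} {ξ : K}

theorem intValuation_eq_exp_neg_rootMultiplicity (hv : v.asIdeal = Ideal.span {X - C ξ})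
    {p : K[X]} (hp : p ≠ 0) :
    v.intValuation p = WithZero.exp (-(p.rootMultiplicity ξ : ℤ)) := by
  classical
  have hmult : multiplicity (Ideal.span {X - C ξ}) (Ideal.span {p}) =
      multiplicity (X - C ξ) p :=
    multiplicity_eq_of_emultiplicity_eq <| emultiplicity_eq_emultiplicity_iff.mpr fun n => by
      rw [Ideal.span_singleton_pow, Ideal.span_singleton_dvd_span_singleton_iff_dvd]
  rw [v.intValuation_eq_exp_neg_multiplicity hp, hv, hmult, rootMultiplicity_eq_multiplicity,
    if_neg hp]

theorem valuation_X_eq_one (hv : v.asIdeal = Ideal.span {X - C ξ}) (hξ : ξ ≠ 0) :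
    v.valuation (RatFunc K) RatFunc.X = 1 := by
  rw [← RatFunc.algebraMap_X, valuation_of_algebraMap,
    intValuation_eq_exp_neg_rootMultiplicity hv X_ne_zero, rootMultiplicity_eq_zero (by simpa)]
  rfl

end IsDedekindDomain.HeightOneSpectrum

theorem RatFunc.C_mul_X_zpow_add_sub_C_mul_X_zpow_add {K : Type*} [Field K] (α β : K) (m : ℤ)
    (b c : ℕ) :
    C α * X ^ (m + b) - C β * X ^ (m + c) =
      X ^ m * algebraMap K[X] (RatFunc K) (.C α * .X ^ b - .C β * .X ^ c) := by
  simp only [zpow_add₀ (X_ne_zero (K := K)), zpow_natCast, map_sub, map_mul, map_pow,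
    algebraMap_C, algebraMap_X]
  ring

/-- For `ξ` a primitive `nl`-th root of unity, `℘ = (x - ξ)`, `1 ≤ d ≠ d' ≤ l`,
`a₁ = dn`, `a₃ = d'n` and `a₂, a₄ ∈ ℤ`, the `℘`-adic valuation of
`P = ξ^{a₁} x^{a₂} - ξ^{a₃} x^{a₄}` is at most `1` (multiplicatively: at least
`ofAdd (-1)`), and it equals `1` iff `a₁ + a₂ ≡ a₃ + a₄ (mod nl)`. -/
theorem stmt15 (n l : ℕ) (hn : 0 < n) (hl : 0 < l)
    (ξ : ℂ) (hξ : IsPrimitiveRoot ξ (n * l))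
    (v : IsDedekindDomain.HeightOneSpectrum (Polynomial ℂ))
    (hv : v.asIdeal = Ideal.span {Polynomial.X - Polynomial.C ξ})
    (d d' : ℕ) (hd1 : 1 ≤ d) (hdl : d ≤ l) (hd'1 : 1 ≤ d') (hd'l : d' ≤ l)
    (hne : d ≠ d') (a₂ a₄ : ℤ) :
    ((Multiplicative.ofAdd (-1 : ℤ) : Multiplicative ℤ) : WithZero (Multiplicative ℤ)) ≤
      v.valuation (RatFunc ℂ)
        (RatFunc.C (ξ ^ (d * n)) * (RatFunc.X : RatFunc ℂ) ^ a₂ -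
          RatFunc.C (ξ ^ (d' * n)) * (RatFunc.X : RatFunc ℂ) ^ a₄) ∧
    (v.valuation (RatFunc ℂ)
        (RatFunc.C (ξ ^ (d * n)) * (RatFunc.X : RatFunc ℂ) ^ a₂ -
          RatFunc.C (ξ ^ (d' * n)) * (RatFunc.X : RatFunc ℂ) ^ a₄) =
        ((Multiplicative.ofAdd (-1 : ℤ) : Multiplicative ℤ) : WithZero (Multiplicative ℤ)) ↔
      ((d : ℤ) * n + a₂) ≡ ((d' : ℤ) * n + a₄) [ZMOD ((n : ℤ) * l)]) := by
  have hN : n * l ≠ 0 := (Nat.mul_pos hn hl).ne'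
  have hξ0 : ξ ≠ 0 := hξ.ne_zero hN
  have hαβ : ξ ^ (d * n) ≠ ξ ^ (d' * n) := by
    simp only [mul_comm _ n, pow_mul]
    exact (hξ.pow (Nat.pos_of_ne_zero hN) rfl).injOn_pow_Icc.ne ⟨hd1, hdl⟩ ⟨hd'1, hd'l⟩ hne
  obtain ⟨m, b, c, rfl, rfl⟩ : ∃ (m : ℤ) (b c : ℕ), a₂ = m + b ∧ a₄ = m + c :=
    ⟨min a₂ a₄, (a₂ - min a₂ a₄).toNat, (a₄ - min a₂ a₄).toNat, by omega, by omega⟩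
  have hQ0 := C_mul_X_pow_sub_C_mul_X_pow_ne_zero hαβ b c
  have hQ1 := rootMultiplicity_C_mul_X_pow_sub_C_mul_X_pow_le_one hξ0 hαβ b c
  have hroot : (C (ξ ^ (d * n)) * X ^ b - C (ξ ^ (d' * n)) * X ^ c).IsRoot ξ ↔
      ((d : ℤ) * n + (m + b)) ≡ ((d' : ℤ) * n + (m + c)) [ZMOD ((n : ℤ) * l)] := by
    rw [IsRoot, eval_sub, sub_eq_zero]
    simp only [eval_mul, eval_C, eval_pow, eval_X, ← pow_add, hξ.pow_eq_pow_iff_modEq hN,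
      ← Int.natCast_modEq_iff, Int.modEq_iff_dvd]
    push_cast
    ring_nf
  rw [RatFunc.C_mul_X_zpow_add_sub_C_mul_X_zpow_add, map_mul, map_zpow₀,
    v.valuation_X_eq_one hv hξ0, one_zpow, one_mul, v.valuation_of_algebraMap,
    v.intValuation_eq_exp_neg_rootMultiplicity hv hQ0, ← hroot, ← rootMultiplicity_pos hQ0]
  change WithZero.exp (-1) ≤ _ ∧ (_ = WithZero.exp (-1) ↔ _)
  simp only [WithZero.exp_le_exp, WithZero.exp_inj]
  omega
end
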